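/- Fix an integer n ≥ 2, constants P > 0 and W > 0, an integer k ≥ 3 with μ_k := k/2 − 1, and a time τ such that W e^{−μ_k τ} ≤ 1/2. Let v : [−P,P] → ℝ be C² with |v(σ)| + |v′(σ)| ≤ W e^{−μ_k τ} for all |σ| ≤ P. Define N_loc(σ) := (2(n−1) v′(σ)² − v(σ)²)/(2(1 + v(σ))) and I(σ) := ∫₀^σ v″(s)/(1 + v(s)) ds. Then there exists a constant C₁, depending only on n and P, such that |N_loc(σ) − n v′(σ) I(σ)| ≤ C₁ W² e^{−2μ_k τ} for all |σ| ≤ P. -/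

import Mathlib

open Topology Filter Asymptotics Set MeasureTheory

/-- `μ_k = k/2 - 1`. -/
noncomputable def mu (k : ℕ) : ℝ := (k:ℝ)/2 - 1

/-!
Put `ε = W e^{-μ_k τ} ≤ 1/2`. Then `|v|, |v'| ≤ ε` on `[-P, P]`, so `1 + v ≥ 1/2` and `N_loc = O(ε²)`.
Integrating by parts, `I(σ) = [v'/(1+v)]₀^σ + ∫₀^σ (v'/(1+v))²`, whence `|I| ≤ 4ε + 4Pε²` and
`n v' I = O(ε²)` as well; finally `ε² = W² e^{-2μ_k τ}`.
-/

lemma abs_div_le_two_mul_abs {a b : ℝ} (hb : 1 / 2 ≤ b) : |a / b| ≤ 2 * |a| := by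
  rw [abs_div, abs_of_pos (show 0 < b by linarith), div_le_iff₀ (by linarith)]
  nlinarith [abs_nonneg a]

lemma abs_mul_sq_sub_sq_div_le {c a b ε : ℝ} (hε : ε ≤ 1 / 2) (ha : |a| ≤ ε) (hb : |b| ≤ ε) :
    |(c * a ^ 2 - b ^ 2) / (2 * (1 + b))| ≤ (|c| + 1) * ε ^ 2 := by
  have hden : 1 ≤ 2 * (1 + b) := by linarith [(abs_le.1 hb).1]
  have ha2 : a ^ 2 ≤ ε ^ 2 := sq_le_sq' (abs_le.1 ha).1 (abs_le.1 ha).2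
  have hb2 : b ^ 2 ≤ ε ^ 2 := sq_le_sq' (abs_le.1 hb).1 (abs_le.1 hb).2
  have hnum : |c * a ^ 2 - b ^ 2| ≤ (|c| + 1) * ε ^ 2 := calc
    |c * a ^ 2 - b ^ 2| ≤ |c| * a ^ 2 + b ^ 2 := by
      have := abs_sub (c * a ^ 2) (b ^ 2)
      rwa [abs_mul, abs_of_nonneg (sq_nonneg a), abs_of_nonneg (sq_nonneg b)] at this
    _ ≤ (|c| + 1) * ε ^ 2 := by nlinarith [abs_nonneg c]
  rw [abs_div, abs_of_pos (show 0 < 2 * (1 + b) by linarith)]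
  exact (div_le_self (abs_nonneg _) hden).trans hnum

section IntervalIcc

variable {a b ε : ℝ} {v : ℝ → ℝ}

lemma abs_derivWithin_Icc_le (hab : a < b) (hv : ContDiffOn ℝ 1 v (Icc a b))
    (hv' : ∀ s ∈ Ioo a b, |deriv v s| ≤ ε) {s : ℝ} (hs : s ∈ Icc a b) :
    |derivWithin v (Icc a b) s| ≤ ε := by
  have hcont := hv.continuousOn_derivWithin (uniqueDiffOn_Icc hab) le_rfl
  refine ContinuousWithinAt.closure_le (s := Ioo a b) (by rwa [closure_Ioo hab.ne])
    ((hcont s hs).mono Ioo_subset_Icc_self).abs continuousWithinAt_const fun t ht => ?_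
  rw [derivWithin_of_mem_nhds (Icc_mem_nhds ht.1 ht.2)]
  exact hv' t ht

lemma hasDerivAt_derivWithin_Icc_div (hab : a < b) (hv : ContDiffOn ℝ 2 v (Icc a b))
    {s : ℝ} (hs : s ∈ Ioo a b) (hvs : 1 + v s ≠ 0) :
    HasDerivAt (fun t => derivWithin v (Icc a b) t / (1 + v t))
      (deriv (deriv v) s / (1 + v s) - (derivWithin v (Icc a b) s / (1 + v s)) ^ 2) s := by
  set w := derivWithin v (Icc a b)
  have hnhds : Icc a b ∈ 𝓝 s := Icc_mem_nhds hs.1 hs.2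
  have hw_eq : w =ᶠ[𝓝 s] deriv v := by
    filter_upwards [isOpen_Ioo.mem_nhds hs] with t ht
    exact derivWithin_of_mem_nhds (Icc_mem_nhds ht.1 ht.2)
  have hw : HasDerivAt w (deriv (deriv v) s) s := by
    rw [← hw_eq.deriv_eq]
    have hw1 : ContDiffOn ℝ 1 w (Icc a b) :=
      hv.derivWithin (uniqueDiffOn_Icc hab) (by norm_num)
    exact ((hw1.contDiffAt hnhds).differentiableAt one_ne_zero).hasDerivAt
  have hvd : HasDerivAt v (w s) s := by
    rw [hw_eq.eq_of_nhds]
    exact ((hv.contDiffAt hnhds).differentiableAt (by norm_num)).hasDerivAt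
  refine (hw.div (hvd.const_add 1) hvs).congr_deriv ?_
  field_simp

-- `deriv v` is junk at the endpoints of `Icc a b`, so the boundary terms use `derivWithin`.
lemma integral_deriv_deriv_div_eq (hab : a < b) (hv : ContDiffOn ℝ 2 v (Icc a b))
    (hpos : ∀ s ∈ Icc a b, 0 < 1 + v s) {x y : ℝ} (hx : x ∈ Icc a b) (hy : y ∈ Icc a b)
    (hint : IntervalIntegrable (fun s => deriv (deriv v) s / (1 + v s)) volume x y) :
    ∫ s in x..y, deriv (deriv v) s / (1 + v s) =
      derivWithin v (Icc a b) y / (1 + v y) - derivWithin v (Icc a b) x / (1 + v x) +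
        ∫ s in x..y, (derivWithin v (Icc a b) s / (1 + v s)) ^ 2 := by
  set w := derivWithin v (Icc a b)
  have hsub : uIcc x y ⊆ Icc a b := uIcc_subset_Icc hx hy
  have hG : ContinuousOn (fun s => w s / (1 + v s)) (uIcc x y) :=
    ((hv.continuousOn_derivWithin (uniqueDiffOn_Icc hab) (by norm_num)).div
      (continuousOn_const.add hv.continuousOn) fun s hs => (hpos s hs).ne').mono hsub
  have hsq : IntervalIntegrable (fun s => (w s / (1 + v s)) ^ 2) volume x y :=
    (hG.pow 2).intervalIntegrable
  have hFTC := intervalIntegral.integral_eq_sub_of_hasDeriv_right hG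
    (fun s hs => (hasDerivAt_derivWithin_Icc_div hab hv
      (Ioo_subset_Ioo (le_min hx.1 hy.1) (max_le hx.2 hy.2) hs)
      (hpos s (hsub (Ioo_subset_Icc_self hs))).ne').hasDerivWithinAt) (hint.sub hsq)
  rw [← hFTC, ← intervalIntegral.integral_add (hint.sub hsq) hsq]
  simp only [sub_add_cancel]

lemma abs_integral_deriv_deriv_div_le (hab : a < b) (hv : ContDiffOn ℝ 2 v (Icc a b))
    (hden : ∀ s ∈ Icc a b, 1 / 2 ≤ 1 + v s) (hv' : ∀ s ∈ Ioo a b, |deriv v s| ≤ ε)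
    {x y : ℝ} (hx : x ∈ Icc a b) (hy : y ∈ Icc a b) :
    |∫ s in x..y, deriv (deriv v) s / (1 + v s)| ≤ 4 * ε + 4 * ε ^ 2 * |y - x| := by
  obtain ⟨c, hc⟩ := exists_between hab
  have hε : 0 ≤ ε := (abs_nonneg _).trans (hv' c hc)
  by_cases hint : IntervalIntegrable (fun s => deriv (deriv v) s / (1 + v s)) volume x y
  swap
  · rw [intervalIntegral.integral_undef hint, abs_zero]
    positivity
  set w := derivWithin v (Icc a b)
  have hG : ∀ s ∈ Icc a b, |w s / (1 + v s)| ≤ 2 * ε := fun s hs =>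
    (abs_div_le_two_mul_abs (hden s hs)).trans
      (by linarith [abs_derivWithin_Icc_le hab hv.of_succ hv' hs])
  have hsq : |∫ s in x..y, (w s / (1 + v s)) ^ 2| ≤ 4 * ε ^ 2 * |y - x| := by
    rw [← Real.norm_eq_abs]
    refine intervalIntegral.norm_integral_le_of_norm_le_const fun s hs => ?_
    have hs' := uIcc_subset_Icc hx hy (uIoc_subset_uIcc hs)
    rw [Real.norm_eq_abs, abs_pow]
    nlinarith [hG s hs', abs_nonneg (w s / (1 + v s))]
  rw [integral_deriv_deriv_div_eq hab hv (fun s hs => by linarith [hden s hs]) hx hy hint]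
  calc |w y / (1 + v y) - w x / (1 + v x) + ∫ s in x..y, (w s / (1 + v s)) ^ 2|
        ≤ |w y / (1 + v y)| + |w x / (1 + v x)| + |∫ s in x..y, (w s / (1 + v s)) ^ 2| :=
        (abs_add_le _ _).trans (by gcongr; exact abs_sub _ _)
    _ ≤ 4 * ε + 4 * ε ^ 2 * |y - x| := by linarith [hG y hy, hG x hx]

end IntervalIcc

theorem stmt15_general (n : ℕ) (P : ℝ) (hP : 0 < P) :
    ∃ C₁ : ℝ, ∀ k : ℕ, 3 ≤ k → ∀ W τ : ℝ, 0 < W →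
      W * Real.exp (-mu k * τ) ≤ 1/2 →
      ∀ v : ℝ → ℝ,
        ContDiffOn ℝ 2 v (Set.Icc (-P) P) →
        (∀ σ : ℝ, |σ| ≤ P → |v σ| + |deriv v σ| ≤ W * Real.exp (-mu k * τ)) →
        ∀ σ : ℝ, |σ| ≤ P →
          |(2 * ((n:ℝ) - 1) * (deriv v σ)^2 - (v σ)^2) / (2 * (1 + v σ))
              - (n:ℝ) * deriv v σ * ∫ s in (0:ℝ)..σ, deriv (deriv v) s / (1 + v s)|
            ≤ C₁ * W^2 * Real.exp (-2 * mu k * τ) := by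
  refine ⟨|2 * ((n : ℝ) - 1)| + 1 + n * (4 + 2 * P), ?_⟩
  intro k _ W τ _ hε v hv hbound σ hσ
  set ε := W * Real.exp (-mu k * τ)
  have hε_sq : W ^ 2 * Real.exp (-2 * mu k * τ) = ε ^ 2 := by
    rw [mul_pow, ← Real.exp_nat_mul]
    ring_nf
  have hv_le : ∀ s ∈ Icc (-P) P, |v s| ≤ ε := fun s hs => by
    linarith [hbound s (abs_le.2 hs), abs_nonneg (deriv v s)]
  have hv'_le : ∀ s ∈ Icc (-P) P, |deriv v s| ≤ ε := fun s hs => by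
    linarith [hbound s (abs_le.2 hs), abs_nonneg (v s)]
  have hσ' : σ ∈ Icc (-P) P := abs_le.1 hσ
  have hI := abs_integral_deriv_deriv_div_le (by linarith) hv
    (fun s hs => by linarith [(abs_le.1 (hv_le s hs)).1])
    (fun s hs => hv'_le s (Ioo_subset_Icc_self hs)) ⟨by linarith, hP.le⟩ hσ'
  rw [sub_zero] at hI
  have hε0 : 0 ≤ ε := (abs_nonneg _).trans (hv_le σ hσ')
  have hN := abs_mul_sq_sub_sq_div_le (c := 2 * ((n : ℝ) - 1)) hε (hv'_le σ hσ') (hv_le σ hσ')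
  have hvI : |deriv v σ * (∫ s in (0:ℝ)..σ, deriv (deriv v) s / (1 + v s))|
      ≤ (4 + 2 * P) * ε ^ 2 := calc
    _ ≤ ε * (4 * ε + 4 * ε ^ 2 * P) := by
      rw [abs_mul]
      exact mul_le_mul (hv'_le σ hσ') (hI.trans (by gcongr)) (abs_nonneg _) hε0
    _ ≤ (4 + 2 * P) * ε ^ 2 := by
      nlinarith [mul_nonneg (mul_nonneg hP.le (sq_nonneg ε)) (by linarith : 0 ≤ 1 - 2 * ε)]
  rw [mul_assoc _ (W ^ 2), hε_sq]
  have htri := abs_sub ((2 * ((n:ℝ) - 1) * (deriv v σ)^2 - (v σ)^2) / (2 * (1 + v σ)))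
    ((n:ℝ) * (deriv v σ * ∫ s in (0:ℝ)..σ, deriv (deriv v) s / (1 + v s)))
  rw [abs_mul, Nat.abs_cast, ← mul_assoc] at htri
  nlinarith [mul_le_mul_of_nonneg_left hvI (Nat.cast_nonneg n)]

/-- the pointwise bound `|N_loc - n v_σ I| ≤ C₁ W² e^{-2μ_k τ}` in the
parabolic region, with `C₁` depending only on `n` and `P`. -/
theorem stmt15 (n : ℕ) (hn : 2 ≤ n) (P : ℝ) (hP : 0 < P) :
    ∃ C₁ : ℝ, ∀ k : ℕ, 3 ≤ k → ∀ W τ : ℝ, 0 < W →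
      W * Real.exp (-mu k * τ) ≤ 1/2 →
      ∀ v : ℝ → ℝ,
        ContDiffOn ℝ 2 v (Set.Icc (-P) P) →
        (∀ σ : ℝ, |σ| ≤ P → |v σ| + |deriv v σ| ≤ W * Real.exp (-mu k * τ)) →
        ∀ σ : ℝ, |σ| ≤ P →
          |(2 * ((n:ℝ) - 1) * (deriv v σ)^2 - (v σ)^2) / (2 * (1 + v σ))
              - (n:ℝ) * deriv v σ * ∫ s in (0:ℝ)..σ, deriv (deriv v) s / (1 + v s)|
            ≤ C₁ * W^2 * Real.exp (-2 * mu k * τ) :=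
  stmt15_general n P hP
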